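/- Let 1 ≤ j ≤ m. The R-algebra map sending v_i ↦ v_i and z_i ↦ u·v_{m+1−i} induces an isomorphism R[v_1,…,v_m, z_1,…,z_m]/(v_j − 1, ∧²[V | H Z], Zᵗ·V − 2π) ≅ R[v_1,…,v_m, u]/(v_j − 1, u·(Σ_{i=1}^m v_i v_{m+1−i}) − 2π), with inverse sending u ↦ z_{m+1−j}. (This is the content of Remark 4.3(a): for every index i_0 the affine chart U_{i_0} of the splitting model admits the uniform presentation with the vector Z_2 and the relations ∧²[V_2 | H Z_2] = 0, Z_2ᵗV_2 = 2π.) -/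

import Mathlib

/-!
In the quotient by `chartIdealVZ` we have `vⱼ = 1`, so the minor `v_{i.rev} z_{j.rev} = vⱼ zᵢ`
expresses every `zᵢ` as `u · v_{i.rev}` with `u := z_{j.rev}`; substituting this into
`Σ zᵢ vᵢ = 2π` gives `u · Σ vᵢ v_{i.rev} = 2π`. Conversely, after the substitution
`zᵢ ↦ u · v_{i.rev}` every minor `v_a z_{b.rev} − v_b z_{a.rev}` vanishes identically. Hence
the two substitutions descend to mutually inverse maps of the quotients.
-/

open MvPolynomial

-- `Sum.inl i` is `vᵢ`, `Sum.inr i` is `zᵢ` (resp. `u`);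
-- the 0-indexed `i ↦ m + 1 − i` is `Fin.rev`.

/-- The ideal `(vⱼ − 1, ∧²[V | HZ], Zᵗ·V − 2π)` presenting the chart `U_{i₀}`. -/
noncomputable def chartIdealVZ (R : Type*) [CommRing R] (π : R) (m : ℕ) (j : Fin m) :
    Ideal (MvPolynomial (Fin m ⊕ Fin m) R) :=
  Ideal.span
    ({X (Sum.inl j) - 1} ∪
      {p | ∃ a b : Fin m, a < b ∧
        p = X (Sum.inl a) * X (Sum.inr b.rev) - X (Sum.inl b) * X (Sum.inr a.rev)} ∪
      {(∑ i : Fin m, X (Sum.inr i) * X (Sum.inl i)) - C (2 * π)})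

/-- The ideal `(vⱼ − 1, u·(Σᵢ vᵢ v_{m+1−i}) − 2π)`. -/
noncomputable def chartIdealVU (R : Type*) [CommRing R] (π : R) (m : ℕ) (j : Fin m) :
    Ideal (MvPolynomial (Fin m ⊕ Unit) R) :=
  Ideal.span
    {X (Sum.inl j) - 1,
      X (Sum.inr ()) * (∑ i : Fin m, X (Sum.inl i) * X (Sum.inl i.rev)) - C (2 * π)}

namespace ChartPresentation

variable {R : Type*} [CommRing R] {π : R} {m : ℕ} {j : Fin m}

local notation "mkVZ" => Ideal.Quotient.mk (chartIdealVZ R π m j)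
local notation "mkVU" => Ideal.Quotient.mk (chartIdealVU R π m j)

theorem mkVZ_X_inl_self : mkVZ (X (Sum.inl j)) = 1 := by
  rw [← map_one mkVZ, Ideal.Quotient.eq]
  exact Ideal.subset_span (Or.inl (Or.inl rfl))

theorem mkVZ_minor_symm (a b : Fin m) :
    mkVZ (X (Sum.inl a)) * mkVZ (X (Sum.inr b.rev)) =
      mkVZ (X (Sum.inl b)) * mkVZ (X (Sum.inr a.rev)) := by
  have of_lt : ∀ a b : Fin m, a < b →
      mkVZ (X (Sum.inl a)) * mkVZ (X (Sum.inr b.rev)) =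
        mkVZ (X (Sum.inl b)) * mkVZ (X (Sum.inr a.rev)) := fun a b hab => by
    simp only [← map_mul, Ideal.Quotient.eq]
    exact Ideal.subset_span (Or.inl (Or.inr ⟨a, b, hab, rfl⟩))
  rcases lt_trichotomy a b with hab | rfl | hba
  · exact of_lt a b hab
  · rfl
  · exact (of_lt b a hba).symm

theorem mkVZ_X_inr (i : Fin m) :
    mkVZ (X (Sum.inr i)) = mkVZ (X (Sum.inr j.rev)) * mkVZ (X (Sum.inl i.rev)) := by
  have h := mkVZ_minor_symm (π := π) (j := j) i.rev j
  rw [Fin.rev_rev, mkVZ_X_inl_self, one_mul] at h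
  rw [← h, mul_comm]

theorem mkVZ_pairing :
    ∑ i : Fin m, mkVZ (X (Sum.inr i)) * mkVZ (X (Sum.inl i)) = algebraMap R _ (2 * π) := by
  simp only [← map_mul, ← map_sum, ← Ideal.Quotient.mk_algebraMap, Ideal.Quotient.eq]
  exact Ideal.subset_span (Or.inr rfl)

theorem mkVZ_X_inr_rev_mul_sum :
    mkVZ (X (Sum.inr j.rev)) * ∑ i : Fin m, mkVZ (X (Sum.inl i)) * mkVZ (X (Sum.inl i.rev)) =
      algebraMap R _ (2 * π) := by
  rw [← mkVZ_pairing, Finset.mul_sum]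
  refine Finset.sum_congr rfl fun i _ => ?_
  rw [mkVZ_X_inr i]
  ring

theorem mkVU_X_inl_self : mkVU (X (Sum.inl j)) = 1 := by
  rw [← map_one mkVU, Ideal.Quotient.eq]
  exact Ideal.subset_span (Or.inl rfl)

theorem mkVU_X_inr_mul_sum :
    mkVU (X (Sum.inr ())) * ∑ i : Fin m, mkVU (X (Sum.inl i)) * mkVU (X (Sum.inl i.rev)) =
      algebraMap R _ (2 * π) := by
  simp only [← map_mul, ← map_sum, ← Ideal.Quotient.mk_algebraMap, Ideal.Quotient.eq]
  exact Ideal.subset_span (Or.inr rfl)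

variable (R π m j)

noncomputable def substVZ :
    Fin m ⊕ Fin m → MvPolynomial (Fin m ⊕ Unit) R ⧸ chartIdealVU R π m j :=
  Sum.elim (fun i => mkVU (X (Sum.inl i))) fun i => mkVU (X (Sum.inr ())) * mkVU (X (Sum.inl i.rev))

noncomputable def substVU :
    Fin m ⊕ Unit → MvPolynomial (Fin m ⊕ Fin m) R ⧸ chartIdealVZ R π m j :=
  Sum.elim (fun i => mkVZ (X (Sum.inl i))) fun _ => mkVZ (X (Sum.inr j.rev))

theorem chartIdealVZ_le_ker : chartIdealVZ R π m j ≤ RingHom.ker (aeval (substVZ R π m j)) := by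
  refine Ideal.span_le.2 ?_
  rintro p ((rfl | ⟨a, b, -, rfl⟩) | rfl) <;>
    simp only [SetLike.mem_coe, RingHom.mem_ker, map_sub, map_mul (aeval _), map_one, map_sum,
      aeval_X, aeval_C, substVZ, Sum.elim_inl, Sum.elim_inr, Fin.rev_rev, sub_eq_zero]
  · exact mkVU_X_inl_self
  · ring
  · rw [← mkVU_X_inr_mul_sum, Finset.mul_sum]
    exact Finset.sum_congr rfl fun i _ => by ring

theorem chartIdealVU_le_ker : chartIdealVU R π m j ≤ RingHom.ker (aeval (substVU R π m j)) := by
  refine Ideal.span_le.2 ?_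
  rintro p (rfl | rfl) <;>
    simp only [SetLike.mem_coe, RingHom.mem_ker, map_sub, map_mul (aeval _), map_one, map_sum,
      aeval_X, aeval_C, substVU, Sum.elim_inl, Sum.elim_inr, sub_eq_zero]
  · exact mkVZ_X_inl_self
  · exact mkVZ_X_inr_rev_mul_sum

noncomputable def toVU :
    (MvPolynomial (Fin m ⊕ Fin m) R ⧸ chartIdealVZ R π m j) →ₐ[R]
      MvPolynomial (Fin m ⊕ Unit) R ⧸ chartIdealVU R π m j :=
  Ideal.Quotient.liftₐ _ (aeval (substVZ R π m j)) fun _ h => chartIdealVZ_le_ker R π m j h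

noncomputable def toVZ :
    (MvPolynomial (Fin m ⊕ Unit) R ⧸ chartIdealVU R π m j) →ₐ[R]
      MvPolynomial (Fin m ⊕ Fin m) R ⧸ chartIdealVZ R π m j :=
  Ideal.Quotient.liftₐ _ (aeval (substVU R π m j)) fun _ h => chartIdealVU_le_ker R π m j h

@[simp]
theorem toVU_mk_X (s : Fin m ⊕ Fin m) : toVU R π m j (mkVZ (X s)) = substVZ R π m j s :=
  aeval_X _ s

@[simp]
theorem toVZ_mk_X (s : Fin m ⊕ Unit) : toVZ R π m j (mkVU (X s)) = substVU R π m j s :=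
  aeval_X _ s

theorem toVU_comp_toVZ : (toVU R π m j).comp (toVZ R π m j) = AlgHom.id R _ := by
  refine Ideal.Quotient.algHom_ext _ (MvPolynomial.algHom_ext fun s => ?_)
  rcases s with i | ⟨⟩
  · simp [substVU, substVZ]
  · simp [substVU, substVZ, mkVU_X_inl_self]

theorem toVZ_comp_toVU : (toVZ R π m j).comp (toVU R π m j) = AlgHom.id R _ := by
  refine Ideal.Quotient.algHom_ext _ (MvPolynomial.algHom_ext fun s => ?_)
  rcases s with i | i
  · simp [substVU, substVZ]
  · simp only [AlgHom.comp_apply, Ideal.Quotient.mkₐ_eq_mk, AlgHom.id_apply, toVU_mk_X,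
      substVZ, Sum.elim_inr, map_mul, toVZ_mk_X, substVU, Sum.elim_inl]
    exact (mkVZ_X_inr i).symm

noncomputable def chartEquiv :
    (MvPolynomial (Fin m ⊕ Fin m) R ⧸ chartIdealVZ R π m j) ≃ₐ[R]
      MvPolynomial (Fin m ⊕ Unit) R ⧸ chartIdealVU R π m j :=
  AlgEquiv.ofAlgHom _ _ (toVU_comp_toVZ R π m j) (toVZ_comp_toVU R π m j)

end ChartPresentation

theorem chart_uniform_presentation_general (R : Type*) [CommRing R] (π : R)
    (m : ℕ) (j : Fin m) :
    ∃ e : (MvPolynomial (Fin m ⊕ Fin m) R ⧸ chartIdealVZ R π m j) ≃ₐ[R]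
        (MvPolynomial (Fin m ⊕ Unit) R ⧸ chartIdealVU R π m j),
      (∀ i : Fin m,
        e (Ideal.Quotient.mk (chartIdealVZ R π m j) (X (Sum.inl i))) =
          Ideal.Quotient.mk (chartIdealVU R π m j) (X (Sum.inl i))) ∧
      (∀ i : Fin m,
        e (Ideal.Quotient.mk (chartIdealVZ R π m j) (X (Sum.inr i))) =
          Ideal.Quotient.mk (chartIdealVU R π m j)
            (X (Sum.inr ()) * X (Sum.inl i.rev))) ∧
      e.symm (Ideal.Quotient.mk (chartIdealVU R π m j) (X (Sum.inr ()))) =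
        Ideal.Quotient.mk (chartIdealVZ R π m j) (X (Sum.inr j.rev)) :=
  ⟨ChartPresentation.chartEquiv R π m j, fun i => ChartPresentation.toVU_mk_X R π m j (.inl i),
    fun i => ChartPresentation.toVU_mk_X R π m j (.inr i),
    ChartPresentation.toVZ_mk_X R π m j (.inr ())⟩

theorem chart_uniform_presentation (R : Type*) [CommRing R] (π : R)
    (m : ℕ) (hm : 2 ≤ m) (j : Fin m) :
    ∃ e : (MvPolynomial (Fin m ⊕ Fin m) R ⧸ chartIdealVZ R π m j) ≃ₐ[R]
        (MvPolynomial (Fin m ⊕ Unit) R ⧸ chartIdealVU R π m j),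
      (∀ i : Fin m,
        e (Ideal.Quotient.mk (chartIdealVZ R π m j) (X (Sum.inl i))) =
          Ideal.Quotient.mk (chartIdealVU R π m j) (X (Sum.inl i))) ∧
      (∀ i : Fin m,
        e (Ideal.Quotient.mk (chartIdealVZ R π m j) (X (Sum.inr i))) =
          Ideal.Quotient.mk (chartIdealVU R π m j)
            (X (Sum.inr ()) * X (Sum.inl i.rev))) ∧
      e.symm (Ideal.Quotient.mk (chartIdealVU R π m j) (X (Sum.inr ()))) =
        Ideal.Quotient.mk (chartIdealVZ R π m j) (X (Sum.inr j.rev)) :=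
  chart_uniform_presentation_general R π m j
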